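/- For every μ ∈ (0,1) and positive integer k, define J_μ(k) = (1+k)/(1 + k·√(tanh(√μ k)/(√μ k))) - 1. Then there exists a constant C > 0 independent of μ and k such that |J_μ(k)| ≤ C · μ^{1/4} · k^{1/2}. -/

import Mathlib

/-!
With `x = √μ k` and `h = √(tanh x / x)`, the quantity is `k (1 - h) / (1 + k h)`, which lies
between `0` and `h⁻¹ - 1` because `0 < h ≤ 1` (i.e. `tanh x ≤ x`). The elementary inequality
`x coth x ≤ 1 + x` (equivalently `2x ≤ e^{2x} - 1`) gives `h⁻¹ ≤ √(1 + x) ≤ 1 + √x`, so the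
quantity is at most `√x = μ^{1/4} √k`: the theorem holds with `C = 1`.
-/

open Real

namespace Real

lemma sinh_le_mul_cosh {x : ℝ} (hx : 0 ≤ x) : sinh x ≤ x * cosh x := by
  refine hasSum_le (fun n => ?_) (hasSum_sinh x) ((hasSum_cosh x).mul_left x)
  rw [mul_div_assoc', ← pow_succ']
  gcongr
  exact Nat.le_succ _

lemma tanh_le_self {x : ℝ} (hx : 0 ≤ x) : tanh x ≤ x := by
  rw [tanh_eq_sinh_div_cosh, div_le_iff₀ (cosh_pos x)]
  exact sinh_le_mul_cosh hx

lemma tanh_pos {x : ℝ} (hx : 0 < x) : 0 < tanh x := by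
  rw [tanh_eq_sinh_div_cosh]
  exact div_pos (sinh_pos_iff.2 hx) (cosh_pos x)

lemma self_div_tanh_le {x : ℝ} (hx : 0 < x) : x / tanh x ≤ 1 + x := by
  have hsinh : x * exp (-x) ≤ sinh x := by
    have hexp : exp x = exp (2 * x) * exp (-x) := by rw [← exp_add]; ring_nf
    rw [sinh_eq, hexp]
    nlinarith [add_one_le_exp (2 * x), exp_pos (-x)]
  rw [tanh_eq_sinh_div_cosh, div_div_eq_mul_div, div_le_iff₀ (sinh_pos_iff.2 hx)]
  nlinarith [cosh_sub_sinh x]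

lemma sqrt_self_div_tanh_le {x : ℝ} (hx : 0 < x) : √(x / tanh x) ≤ 1 + √x := by
  rw [sqrt_le_iff]
  refine ⟨by positivity, (self_div_tanh_le hx).trans ?_⟩
  nlinarith [sq_sqrt hx.le, sqrt_nonneg x]

end Real

lemma abs_one_add_div_one_add_mul_sub_one_le {K h : ℝ} (hK : 0 ≤ K) (h0 : 0 < h)
    (h1 : h ≤ 1) : |(1 + K) / (1 + K * h) - 1| ≤ h⁻¹ - 1 := by
  have hden : 0 < 1 + K * h := by positivity
  have hJ : (1 + K) / (1 + K * h) - 1 = K * (1 - h) / (1 + K * h) := by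
    field_simp
    ring
  have h1' : 0 ≤ 1 - h := sub_nonneg.2 h1
  rw [hJ, abs_of_nonneg (by positivity), show h⁻¹ - 1 = (1 - h) / h by field_simp,
    div_le_div_iff₀ hden h0]
  nlinarith

lemma abs_one_add_div_one_add_mul_sqrt_tanh_div_sub_one_le {K x : ℝ} (hK : 0 ≤ K)
    (hx : 0 < x) : |(1 + K) / (1 + K * √(tanh x / x)) - 1| ≤ √x := by
  have hpos : 0 < √(tanh x / x) := sqrt_pos.2 (div_pos (tanh_pos hx) hx)
  have hle : √(tanh x / x) ≤ 1 := sqrt_le_one.2 ((div_le_one hx).2 (tanh_le_self hx.le))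
  calc _ ≤ (√(tanh x / x))⁻¹ - 1 := abs_one_add_div_one_add_mul_sub_one_le hK hpos hle
    _ = √(x / tanh x) - 1 := by rw [← sqrt_inv, inv_div]
    _ ≤ √x := by linarith [sqrt_self_div_tanh_le hx]

/-- There is C > 0 with |(1+k)/(1 + k√(tanh(√μ k)/(√μ k))) - 1| ≤ C μ^{1/4} k^{1/2}
for all μ ∈ (0,1) and positive integers k. -/
theorem abs_J_mu_le :
    ∃ C : ℝ, 0 < C ∧ ∀ (μ : ℝ), 0 < μ → μ < 1 → ∀ (k : ℕ), 1 ≤ k →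
      |(1 + (k : ℝ))
          / (1 + (k : ℝ) * Real.sqrt (Real.tanh (Real.sqrt μ * k)
              / (Real.sqrt μ * k))) - 1|
        ≤ C * μ ^ (1 / 4 : ℝ) * Real.sqrt k := by
  refine ⟨1, one_pos, fun μ hμ _ k hk => ?_⟩
  have hx : 0 < √μ * k := mul_pos (sqrt_pos.2 hμ) (by exact_mod_cast hk)
  have hsqrt : √(√μ * k) = μ ^ (1 / 4 : ℝ) * √k := by
    rw [sqrt_mul (sqrt_nonneg μ), sqrt_eq_rpow, sqrt_eq_rpow, ← rpow_mul hμ.le]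
    norm_num
  rw [one_mul, ← hsqrt]
  exact abs_one_add_div_one_add_mul_sqrt_tanh_div_sub_one_le k.cast_nonneg hx
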